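/- arXiv:2509.06521 — 4 statements merged into one kernel-verified Lean document; each statement's English description precedes it below -/
import Mathlib

section
/- Let a finite group G = A₁A₂⋯A_k be a product of nilpotent subgroups A₁, …, A_k such that A_i is normalised by A_j whenever 1 ≤ i < j ≤ k. Fix a prime p and let P_i be the (unique) Sylow p-subgroup of A_i for each i. Then the product P₁P₂⋯P_k is a Sylow p-subgroup of G. -/
/-!
Induct on `k`. Put `H = A₁⋯Aₘ`, `S = P₁⋯Pₘ`, `A = Aₘ₊₁`, `P = Pₘ₊₁`. Since `P` is the largest
`p`-subgroup of the nilpotent group `A`, it is invariant under the normaliser of `A`; hence `A`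
normalises `H` and `P` normalises `S`, so `HA` and `SP` are subgroups with
`|HA| |H ∩ A| = |H| |A|` and `|SP| |S ∩ P| = |S| |P|`. The `p`-subgroup `H ∩ P` normalises the
Sylow subgroup `S` of `H`, so it lies in `S`: thus `S ∩ P = H ∩ P`, which is a Sylow subgroup of
`H ∩ A`. Comparing `p`-parts of the two product formulas gives `|SP| = |HA|_p`.
-/

open scoped Pointwise

open Subgroup

theorem Fin.iSup_eq_iSup_castSucc_sup_last {α : Type*} [CompleteLattice α] {n : ℕ}
    (f : Fin (n + 1) → α) : ⨆ i, f i = (⨆ i : Fin n, f i.castSucc) ⊔ f (Fin.last n) :=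
  le_antisymm
    (iSup_le <| Fin.lastCases le_sup_right
      fun i => le_sup_of_le_left (le_iSup (fun i : Fin n => f i.castSucc) i))
    (sup_le (iSup_le fun i => le_iSup f i.castSucc) (le_iSup f _))

section

variable {G : Type*} [Group G]

theorem Subgroup.card_sup_mul_card_inf_of_le_normalizer {N H : Subgroup G}
    (hLE : H ≤ normalizer (N : Set G)) :
    Nat.card (N ⊔ H : Subgroup G) * Nat.card (N ⊓ H : Subgroup G) = Nat.card N * Nat.card H := by
  have hcard {K L : Subgroup G} (h : K ≤ L) : Nat.card L = K.relIndex L * Nat.card K := by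
    rw [← relIndex_bot_left, ← relIndex_bot_left, mul_comm, relIndex_mul_relIndex _ _ _ bot_le h]
  have := normal_subgroupOf_of_le_normalizer hLE
  have := normal_subgroupOf_sup_of_le_normalizer hLE
  have second_iso : N.relIndex (H ⊔ N) = N.relIndex H :=
    Nat.card_congr (QuotientGroup.quotientInfEquivProdNormalizerQuotient H N hLE).toEquiv.symm
  rw [hcard (le_sup_left : N ≤ N ⊔ H), hcard (inf_le_right : N ⊓ H ≤ H), inf_relIndex_right,
    sup_comm, second_iso]
  ring

theorem Subgroup.le_normalizer_iSup {ι : Sort*} {K : Subgroup G} {A : ι → Subgroup G}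
    (h : ∀ i, K ≤ normalizer (A i : Set G)) : K ≤ normalizer ((⨆ i, A i : Subgroup G) : Set G) :=
  (le_iInf h).trans (iInf_normalizer_le_normalizer_iSup A)

theorem Subgroup.coe_iSup_eq_prod_ofFn {k : ℕ} (A : Fin k → Subgroup G)
    (hA : ∀ i j, i < j → A j ≤ normalizer (A i : Set G)) :
    ((⨆ i, A i : Subgroup G) : Set G) = (List.ofFn fun i => (A i : Set G)).prod := by
  induction k with
  | zero => simp [iSup_of_empty, Set.singleton_one]
  | succ k ih =>
    rw [Fin.iSup_eq_iSup_castSucc_sup_last, List.ofFn_succ', List.prod_concat,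
      coe_mul_of_right_le_normalizer_left _ _
        (le_normalizer_iSup fun i => hA _ _ (Fin.castSucc_lt_last i)),
      ih _ fun i j hij => hA _ _ (Fin.castSucc_lt_castSucc_iff.mpr hij)]

theorem IsPGroup.card_dvd_ordProj {p : ℕ} [Fact p.Prime] {R H : Subgroup G} [Finite H]
    (hR : IsPGroup p R) (hRH : R ≤ H) : Nat.card R ∣ ordProj[p] (Nat.card H) := by
  have : Finite R := Finite.of_injective _ (inclusion_injective hRH)
  obtain ⟨n, hn⟩ := IsPGroup.iff_card.mp hR
  rw [hn, ← (Fact.out : p.Prime).pow_dvd_iff_dvd_ordProj Nat.card_pos.ne', ← hn]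
  exact card_dvd_of_le hRH

theorem le_of_le_normalizer_of_card_eq_ordProj {p : ℕ} [Fact p.Prime] {S H R : Subgroup G}
    [Finite H] (hSH : S ≤ H) (hS : Nat.card S = ordProj[p] (Nat.card H)) (hR : IsPGroup p R)
    (hRH : R ≤ H) (hRS : R ≤ normalizer (S : Set G)) : R ≤ S := by
  have hSRH : S ⊔ R ≤ H := sup_le hSH hRH
  have hSR : IsPGroup p (S ⊔ R : Subgroup G) :=
    (IsPGroup.of_card hS).to_sup_of_normal_left' hR hRS
  have : Finite (S ⊔ R : Subgroup G) := Finite.of_injective _ (inclusion_injective hSRH)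
  refine sup_eq_left.mp (eq_of_le_of_card_ge le_sup_left ?_).symm
  exact hS ▸ Nat.le_of_dvd (Nat.ordProj_pos _ _) (hSR.card_dvd_ordProj hSRH)

def IsGreatestPSubgroup (p : ℕ) (A P : Subgroup G) : Prop :=
  IsGreatest {R : Subgroup G | IsPGroup p R ∧ R ≤ A} P

namespace IsGreatestPSubgroup

variable {p : ℕ} {A P : Subgroup G}

theorem isPGroup (hP : IsGreatestPSubgroup p A P) : IsPGroup p P := hP.1.1

theorem le (hP : IsGreatestPSubgroup p A P) : P ≤ A := hP.1.2

theorem le_of_isPGroup (hP : IsGreatestPSubgroup p A P) {R : Subgroup G} (hR : IsPGroup p R)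
    (hRA : R ≤ A) : R ≤ P :=
  hP.2 ⟨hR, hRA⟩

theorem normalizer_le (hP : IsGreatestPSubgroup p A P) :
    normalizer (A : Set G) ≤ normalizer (P : Set G) := by
  have map_conj_le {g : G} (hg : g ∈ normalizer (A : Set G)) :
      P.map (MulAut.conj g : G →* G) ≤ P :=
    hP.le_of_isPGroup (hP.isPGroup.map _)
      ((map_mono hP.le).trans (mem_normalizer_iff_map_conj_eq.mp hg).le)
  intro g hg
  refine mem_normalizer_iff_map_conj_eq.mpr (le_antisymm (map_conj_le hg) ?_)
  calc P = (P.map (MulAut.conj g⁻¹ : G →* G)).map (MulAut.conj g : G →* G) := by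
        rw [map_map]; ext; simp [mul_assoc]
    _ ≤ P.map (MulAut.conj g : G →* G) := map_mono (map_conj_le (inv_mem hg))

theorem card_inf [Fact p.Prime] (hP : IsGreatestPSubgroup p A P) {B : Subgroup G} [Finite B]
    (hBA : B ≤ A) : Nat.card (B ⊓ P : Subgroup G) = ordProj[p] (Nat.card B) := by
  obtain ⟨R⟩ : Nonempty (Sylow p B) := inferInstance
  refine Nat.dvd_antisymm ((hP.isPGroup.to_le inf_le_right).card_dvd_ordProj inf_le_left) ?_
  rw [← R.card_eq_multiplicity, ← card_map_of_injective B.subtype_injective]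
  exact card_dvd_of_le (le_inf (map_subtype_le _)
    (hP.le_of_isPGroup (R.isPGroup'.map _) ((map_subtype_le _).trans hBA)))

end IsGreatestPSubgroup

theorem isGreatestPSubgroup_map_sylow {p : ℕ} [Fact p.Prime] {A : Subgroup G} [Finite A]
    [Group.IsNilpotent A] (Q : Sylow p A) : IsGreatestPSubgroup p A (Q.map A.subtype) := by
  refine ⟨⟨Q.isPGroup'.map _, map_subtype_le _⟩, fun R ⟨hR, hRA⟩ => ?_⟩
  have hRQ : R.subgroupOf A ≤ Q := le_sup_left.trans
    (Q.is_maximal' (hR.comap_subtype.to_sup_of_normal_right Q.isPGroup') le_sup_right).le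
  simpa [subgroupOf_map_subtype, inf_eq_left.mpr hRA] using map_mono (f := A.subtype) hRQ

theorem le_normalizer_of_isGreatestPSubgroup {p k : ℕ} {A P : Fin k → Subgroup G}
    (hA : ∀ i j, i < j → A j ≤ normalizer (A i : Set G))
    (hP : ∀ i, IsGreatestPSubgroup p (A i) (P i))
    (i j : Fin k) (hij : i < j) : P j ≤ normalizer (P i : Set G) :=
  (hP j).le.trans ((hA i j hij).trans (hP i).normalizer_le)

theorem card_sup_eq_ordProj_of_le_normalizer [Finite G] {p : ℕ} [Fact p.Prime]
    {H A S P : Subgroup G} (hA : A ≤ normalizer (H : Set G)) (hSH : S ≤ H)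
    (hS : Nat.card S = ordProj[p] (Nat.card H)) (hP : IsGreatestPSubgroup p A P)
    (hPS : P ≤ normalizer (S : Set G)) :
    Nat.card (S ⊔ P : Subgroup G) = ordProj[p] (Nat.card (H ⊔ A : Subgroup G)) := by
  have hHP : H ⊓ P ≤ S := le_of_le_normalizer_of_card_eq_ordProj hSH hS
    (hP.isPGroup.to_le inf_le_right) inf_le_left (inf_le_right.trans hPS)
  have hSP : S ⊓ P = H ⊓ P := le_antisymm (inf_le_inf_right _ hSH) (le_inf hHP inf_le_right)
  have hcard_HP :
      Nat.card (H ⊓ P : Subgroup G) = ordProj[p] (Nat.card (H ⊓ A : Subgroup G)) := by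
    rw [← hP.card_inf inf_le_right, inf_assoc, inf_eq_right.mpr hP.le]
  have hcard_P : Nat.card P = ordProj[p] (Nat.card A) := by
    rw [← hP.card_inf le_rfl, inf_eq_right.mpr hP.le]
  refine Nat.eq_of_mul_eq_mul_right (Nat.ordProj_pos (Nat.card (H ⊓ A : Subgroup G)) p) ?_
  calc Nat.card (S ⊔ P : Subgroup G) * ordProj[p] (Nat.card (H ⊓ A : Subgroup G))
      = Nat.card (S ⊔ P : Subgroup G) * Nat.card (S ⊓ P : Subgroup G) := by rw [hSP, hcard_HP]
    _ = ordProj[p] (Nat.card H) * ordProj[p] (Nat.card A) := by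
      rw [card_sup_mul_card_inf_of_le_normalizer hPS, hS, hcard_P]
    _ = ordProj[p] (Nat.card (H ⊔ A : Subgroup G) * Nat.card (H ⊓ A : Subgroup G)) := by
      rw [card_sup_mul_card_inf_of_le_normalizer hA,
        Nat.ordProj_mul _ Nat.card_pos.ne' Nat.card_pos.ne']
    _ = ordProj[p] (Nat.card (H ⊔ A : Subgroup G)) *
          ordProj[p] (Nat.card (H ⊓ A : Subgroup G)) :=
      Nat.ordProj_mul _ Nat.card_pos.ne' Nat.card_pos.ne'

theorem card_iSup_eq_ordProj [Finite G] {p : ℕ} [Fact p.Prime] {k : ℕ}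
    (A P : Fin k → Subgroup G)
    (hA : ∀ i j, i < j → A j ≤ normalizer (A i : Set G))
    (hP : ∀ i, IsGreatestPSubgroup p (A i) (P i)) :
    Nat.card (⨆ i, P i : Subgroup G) = ordProj[p] (Nat.card (⨆ i, A i : Subgroup G)) := by
  induction k with
  | zero => simp [iSup_of_empty]
  | succ k ih =>
    rw [Fin.iSup_eq_iSup_castSucc_sup_last A, Fin.iSup_eq_iSup_castSucc_sup_last P]
    exact card_sup_eq_ordProj_of_le_normalizer
      (le_normalizer_iSup fun i => hA _ _ (Fin.castSucc_lt_last i))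
      (iSup_mono fun i => (hP _).le)
      (ih _ _ (fun i j hij => hA _ _ (Fin.castSucc_lt_castSucc_iff.mpr hij)) fun i => hP _)
      (hP _)
      (le_normalizer_iSup fun i =>
        le_normalizer_of_isGreatestPSubgroup hA hP _ _ (Fin.castSucc_lt_last i))

end

/-- if `G = A₀A₁⋯A_{k-1}` with each `Aᵢ` nilpotent and `Aᵢ` normalised
by `Aⱼ` for `i < j`, and `Pᵢ` is the (unique) Sylow `p`-subgroup of `Aᵢ`, then
`P₀P₁⋯P_{k-1}` is a Sylow `p`-subgroup of `G`. -/
theorem prod_sylow_is_sylow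
    {G : Type*} [Group G] [Finite G] {k : ℕ} (A : Fin k → Subgroup G)
    (hnil : ∀ i, Group.IsNilpotent (A i))
    (hprod : (List.ofFn fun i => ((A i : Subgroup G) : Set G)).prod = Set.univ)
    (hnorm : ∀ i j : Fin k, i < j → A j ≤ Subgroup.normalizer (A i : Set G))
    (p : ℕ) (hp : p.Prime)
    (P : Fin k → Subgroup G)
    (hP : ∀ i, ∃ Q : Sylow p (A i), ((Q : Subgroup (A i)).map (A i).subtype) = P i) :
    ∃ S : Sylow p G, ((S : Subgroup G) : Set G) =
      (List.ofFn fun i => ((P i : Subgroup G) : Set G)).prod := by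
  have : Fact p.Prime := ⟨hp⟩
  have hgreatest (i : Fin k) : IsGreatestPSubgroup p (A i) (P i) := by
    have := hnil i
    obtain ⟨Q, hQ⟩ := hP i
    exact hQ ▸ isGreatestPSubgroup_map_sylow Q
  have hA : (⨆ i, A i : Subgroup G) = ⊤ := by
    rw [← coe_eq_univ, coe_iSup_eq_prod_ofFn A hnorm, hprod]
  have hcard : Nat.card (⨆ i, P i : Subgroup G) = ordProj[p] (Nat.card G) := by
    rw [card_iSup_eq_ordProj A P hnorm hgreatest, hA, card_top]
  exact ⟨Sylow.ofCard _ hcard,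
    coe_iSup_eq_prod_ofFn P (le_normalizer_of_isGreatestPSubgroup hnorm hgreatest)⟩
end

section
/- Every group automorphism of Q8 of order 3 is an automorphism of the left brace structure on Q8 given by the componentwise F₂-addition on exponent triples; consequently O²(Aut(Q8)) (the subgroup of Aut(Q8) ≅ S₄ generated by all elements of order 3, i.e. A₄) acts on Q8 by brace automorphisms. -/
/-- `Q₈` as the generalised quaternion group `QuaternionGroup 2`, with
`a = a 1`, `b = xa 0`, `c = a² = b² = a 2`. -/
abbrev Q8 := QuaternionGroup 2

/-- The exponent triple `(x, y, z) ∈ 𝔽₂³` of the normal form `aˣ bʸ cᶻ` of an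
element of `Q₈` (where `a = a 1`, `b = xa 0`, `c = a 2`). -/
def q8exp : Q8 → ZMod 2 × ZMod 2 × ZMod 2
  | .a i => ((i.val % 2 : ℕ), 0, (i.val / 2 : ℕ))
  | .xa j => (((-j).val % 2 : ℕ), 1, ((-j).val / 2 : ℕ))

/-- The element `aˣ bʸ cᶻ` of `Q₈` with exponent triple `(x, y, z) ∈ 𝔽₂³`. -/
def q8elt : ZMod 2 × ZMod 2 × ZMod 2 → Q8
  | (x, y, z) =>
    if y = 0 then .a ((x.val + 2 * z.val : ℕ) : ZMod 4)
    else .xa (-((x.val + 2 * z.val : ℕ) : ZMod 4))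

/-- The addition on `Q₈` defined by componentwise `𝔽₂`-addition of exponent
triples: `aˣ¹bʸ¹cᶻ¹ + aˣ²bʸ²cᶻ² = aˣ¹⁺ˣ²bʸ¹⁺ʸ²cᶻ¹⁺ᶻ²`. -/
def qadd (u v : Q8) : Q8 := q8elt (q8exp u + q8exp v)

/-- The additive inverse for `qadd`. -/
def qneg (u : Q8) : Q8 := q8elt (-(q8exp u))

/-- Candidate automorphism determined by images `p` of `a 1` and `q` of `xa 0`. -/
def q8F (p q : Q8) : Q8 → Q8
  | .a i => p ^ i.val
  | .xa j => p ^ (-j).val * q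

lemma q8F_spec (α : Q8 ≃* Q8) (x : Q8) :
    α x = q8F (α (.a 1)) (α (.xa 0)) x := by
  cases x with
  | a i =>
      have h : (QuaternionGroup.a i : Q8) = (QuaternionGroup.a 1) ^ i.val := by
        rw [QuaternionGroup.a_one_pow]
        simp [ZMod.natCast_val, ZMod.cast_id]
      conv_lhs => rw [h, map_pow]
      rfl
  | xa j =>
      have h : (QuaternionGroup.xa j : Q8)
          = (QuaternionGroup.a 1) ^ (-j).val * QuaternionGroup.xa 0 := by
        rw [QuaternionGroup.a_one_pow, QuaternionGroup.a_mul_xa]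
        simp [ZMod.natCast_val, ZMod.cast_id]
      conv_lhs => rw [h, map_mul, map_pow]
      rfl

lemma q8F_key : ∀ p q : Q8,
    (∀ x y : Q8, q8F p q (x * y) = q8F p q x * q8F p q y) →
    (∀ x : Q8, q8F p q (q8F p q (q8F p q x)) = x) →
    ∀ u v : Q8, q8F p q (qadd u v) = qadd (q8F p q u) (q8F p q v) := by
  decide

/-- every order-`3` automorphism of `Q₈` preserves the brace
addition; consequently every element of `O²(Aut(Q₈))`, the subgroup generated by
all elements of order `3`, acts on `Q₈` by brace automorphisms. -/
theorem q8_order_three_automorphisms_additive :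
    (∀ α : Q8 ≃* Q8, orderOf α = 3 → ∀ u v : Q8, α (qadd u v) = qadd (α u) (α v)) ∧
    (∀ α ∈ Subgroup.closure {β : Q8 ≃* Q8 | orderOf β = 3},
      ∀ u v : Q8, α (qadd u v) = qadd (α u) (α v)) := by
  have part1 : ∀ α : Q8 ≃* Q8, orderOf α = 3 →
      ∀ u v : Q8, α (qadd u v) = qadd (α u) (α v) := by
    intro α hα u v
    set p := α (.a 1)
    set q := α (.xa 0)
    have hmul : ∀ x y : Q8, q8F p q (x * y) = q8F p q x * q8F p q y := by
      intro x y
      rw [← q8F_spec, ← q8F_spec, ← q8F_spec, map_mul]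
    have h3 : α ^ 3 = 1 := by rw [← hα]; exact pow_orderOf_eq_one α
    have htriple : ∀ x : Q8, q8F p q (q8F p q (q8F p q x)) = x := by
      intro x
      rw [← q8F_spec, ← q8F_spec, ← q8F_spec]
      have : (α ^ 3) x = α (α (α x)) := by
        rw [pow_succ, pow_succ, pow_one]; rfl
      rw [← this, h3]; rfl
    have := q8F_key p q hmul htriple u v
    rwa [← q8F_spec, ← q8F_spec, ← q8F_spec] at this
  refine ⟨part1, ?_⟩
  let S : Subgroup (Q8 ≃* Q8) :=
    { carrier := {α | ∀ u v : Q8, α (qadd u v) = qadd (α u) (α v)}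
      one_mem' := by intro u v; rfl
      mul_mem' := by
        intro α β hα hβ u v
        show α (β (qadd u v)) = qadd (α (β u)) (α (β v))
        rw [hβ, hα]
      inv_mem' := by
        intro α hα u v
        show α.symm (qadd u v) = qadd (α.symm u) (α.symm v)
        have h := hα (α.symm u) (α.symm v)
        rw [α.apply_symm_apply, α.apply_symm_apply] at h
        rw [← h, α.symm_apply_apply] }
  intro α hmem
  have : α ∈ S := by
    refine Subgroup.closure_le S |>.mpr ?_ hmem
    intro β hβ
    exact part1 β hβ
  exact this
end

section
/- Let G be a finite nilpotent group of nilpotency class at most 2. Then G admits a left brace structure, i.e. there is an abelian group operation + on G with a(b+c) = ab − a + ac for all a,b,c ∈ G (equivalently, G is an IYB-group). -/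
/-!
If all commutators are central, `(a, b) ↦ ⁅a, b⁆` induces an alternating bilinear pairing `ω` on
the finite abelian group `G ⧸ center G` with values in `center G`. Splitting `G ⧸ center G` into
cyclic factors, on each of which `ω` vanishes, and keeping only the blocks of `ω` above the diagonal
gives a bilinear `β` with `⁅a, b⁆ = β b a * (β a b)⁻¹`. Then `a + b := a * b * β a b` is an
abelian group law on `G`, and since `β` is bilinear with central values that only depend on
classes modulo the center, the brace identity reduces to an identity in `center G`.
-/

open scoped commutatorElement IsMulCommutative
open Subgroup

/-- A finite group is an IYB-group iff it is the multiplicative group of a left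
brace, i.e. there is an abelian group operation `+` on `G` with
`a(b + c) = ab − a + ac`. -/
def IsIYB (G : Type*) [Group G] : Prop :=
  ∃ (add : G → G → G) (neg : G → G) (zero : G),
    (∀ a b, add a b = add b a) ∧
    (∀ a b c, add (add a b) c = add a (add b c)) ∧
    (∀ a, add zero a = a) ∧
    (∀ a, add (neg a) a = zero) ∧
    (∀ a b c : G, a * add b c = add (add (a * b) (neg a)) (a * c))

namespace MonoidHom

variable {C : Type*} [CommGroup C]

theorem inv_apply_of_alternating {V : Type*} [MulOneClass V] (ω : V →* V →* C)
    (hω : ∀ x, ω x x = 1) (x y : V) : (ω x y)⁻¹ = ω y x := by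
  have h := hω (x * y)
  simp only [map_mul, mul_apply, hω, one_mul, mul_one] at h
  exact inv_eq_of_mul_eq_one_left h

theorem eq_one_of_alternating_of_isCyclic {V : Type*} [Group V] [IsCyclic V]
    (ω : V →* V →* C) (hω : ∀ x, ω x x = 1) (x y : V) : ω x y = 1 := by
  obtain ⟨g, hg⟩ := IsCyclic.exists_zpow_surjective (G := V)
  obtain ⟨m, rfl⟩ := hg x
  obtain ⟨k, rfl⟩ := hg y
  simp [hω]

theorem apply_eq_prod_mulSingle {ι : Type*} [Fintype ι] [DecidableEq ι] {M : ι → Type*}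
    [∀ i, CommMonoid (M i)] (ω : (∀ i, M i) →* (∀ i, M i) →* C) (u v : ∀ i, M i) :
    ω u v = ∏ i, ∏ j, ω (Pi.mulSingle i (u i)) (Pi.mulSingle j (v j)) := by
  conv_lhs => rw [← Finset.univ_prod_mulSingle u, ← Finset.univ_prod_mulSingle v]
  simp only [map_prod, finsetProd_apply]
  exact Finset.prod_comm

theorem exists_eq_div_flip_of_alternating_pi {ι : Type*} [Fintype ι] [LinearOrder ι]
    {M : ι → Type*} [∀ i, CommMonoid (M i)] (ω : (∀ i, M i) →* (∀ i, M i) →* C)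
    (hω : ∀ x, ω x x = 1) (hdiag : ∀ i x y, ω (Pi.mulSingle i x) (Pi.mulSingle i y) = 1) :
    ∃ B : (∀ i, M i) →* (∀ i, M i) →* C, ω = B / B.flip := by
  let π i : (∀ i, M i) →* (∀ i, M i) := (MonoidHom.mulSingle M i).comp (Pi.evalMonoidHom M i)
  refine ⟨∏ i, ∏ j, if i < j then (ω.comp (π i)).compl₂ (π j) else 1, ext_iff₂.mpr fun u v => ?_⟩
  let ωuv i j := ω (Pi.mulSingle i (u i)) (Pi.mulSingle j (v j))
  let ωvu i j := ω (Pi.mulSingle i (v i)) (Pi.mulSingle j (u j))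
  have hsplit i j : ωuv i j = (if i < j then ωuv i j else 1) / (if j < i then ωvu j i else 1) := by
    rcases lt_trichotomy i j with h | rfl | h
    · simp [h, h.not_gt]
    · simpa using hdiag i (u i) (v i)
    · simp [h, h.not_gt, ωuv, ωvu, div_eq_mul_inv, ω.inv_apply_of_alternating hω]
  simp only [div_apply, flip_apply, finsetProd_apply, apply_ite (fun f : _ →* _ →* C => f u v),
    apply_ite (fun f : _ →* _ →* C => f v u), compl₂_apply, comp_apply, one_apply, π,
    mulSingle_apply, Pi.evalMonoidHom_apply]
  calc ω u v = ∏ i, ∏ j, ωuv i j := apply_eq_prod_mulSingle ω u v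
    _ = _ := by
      simp only [Finset.prod_congr rfl fun i _ => Finset.prod_congr rfl fun j _ => hsplit i j,
        Finset.prod_div_distrib]
      rw [Finset.prod_comm (f := fun i j => if j < i then ωvu j i else 1)]

theorem exists_eq_div_flip_of_alternating {V : Type*} [CommGroup V] [Finite V]
    (ω : V →* V →* C) (hω : ∀ x, ω x x = 1) : ∃ B : V →* V →* C, ω = B / B.flip := by
  obtain ⟨ι, _, n, -, ⟨e⟩⟩ := CommGroup.equiv_prod_multiplicative_zmod_of_finite V
  let : LinearOrder ι := LinearOrder.lift' _ (Fintype.equivFin ι).injective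
  let ω' := (ω.comp e.symm.toMonoidHom).compl₂ e.symm.toMonoidHom
  have hdiag i x y : ω' (Pi.mulSingle i x) (Pi.mulSingle i y) = 1 := by
    let incl := MonoidHom.mulSingle (fun i => Multiplicative (ZMod (n i))) i
    exact eq_one_of_alternating_of_isCyclic ((ω'.comp incl).compl₂ incl) (fun _ => hω _) x y
  obtain ⟨B', hB'⟩ := ω'.exists_eq_div_flip_of_alternating_pi (fun _ => hω _) hdiag
  refine ⟨(B'.comp e.toMonoidHom).compl₂ e.toMonoidHom, ext_iff₂.mpr fun x y => ?_⟩
  simpa [ω'] using congr($hB' (e x) (e y))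

def liftQuotient₂ {G H : Type*} [Group G] [Group H] {N : Subgroup G} {K : Subgroup H}
    [N.Normal] [K.Normal] (f : G →* H →* C) (hN : N ≤ f.ker) (hK : K ≤ f.flip.ker) :
    G ⧸ N →* H ⧸ K →* C :=
  (QuotientGroup.lift K (QuotientGroup.lift N f hN).flip fun _ hz =>
    MonoidHom.ext fun x => QuotientGroup.induction_on x fun a => congr($(hK hz) a)).flip

end MonoidHom

section ClassTwo

variable {G : Type*} [Group G]

theorem commutator_le_center_of_lowerCentralSeries_two_eq_bot
    (h : (⊤ : Subgroup G).lowerCentralSeries 2 = ⊥) : commutator G ≤ center G := by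
  rwa [Subgroup.lowerCentralSeries_succ, top_lowerCentralSeries_one,
    commutator_top_right_eq_bot_iff_le_center] at h

theorem isIYB_of_bilinear (β : G →* G →* center G) (h₁ : center G ≤ β.ker)
    (h₂ : center G ≤ β.flip.ker) (hβ : ∀ a b : G, ⁅a, b⁆ * β a b = β b a) : IsIYB G := by
  have hβz (z : center G) (a : G) : β z a = 1 := congr($(h₁ z.2) a)
  have hβz' (a : G) (z : center G) : β a z = 1 := congr($(h₂ z.2) a)
  have hc (z : center G) (g : G) : Commute (z : G) g := (mem_center_iff.mp z.2 g).symm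
  have hG (a b : G) : ⁅a, b⁆ ∈ center G := by
    rw [eq_mul_inv_of_mul_eq (hβ a b)]
    exact mul_mem (β b a).2 (inv_mem (β a b).2)
  have hconj (a b : G) : β (a * b * a⁻¹) = β b := by
    rw [map_mul, map_mul, map_inv, mul_right_comm, mul_inv_cancel, one_mul]
  refine ⟨fun a b => a * b * β a b, fun a => a⁻¹ * β a a, 1, fun a b => ?_, fun a b c => ?_,
    fun a => ?_, fun a => ?_, fun a b c => ?_⟩
  · dsimp only
    rw [← hβ, ← mul_assoc, mem_center_iff.mp (hG b a) (a * b)]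
    congr 1
    group
  · simp only [map_mul, MonoidHom.mul_apply, hβz, hβz', mul_one]
    rw [Commute.right_comm (hc _ c)]
    simp only [mul_assoc, ← coe_mul]
    congr 4
    simp only [mul_comm, mul_left_comm]
  · simp
  · simp only [map_mul, MonoidHom.mul_apply, map_inv, MonoidHom.inv_apply, hβz, mul_one]
    rw [Commute.right_comm (hc _ a), inv_mul_cancel, one_mul, ← coe_mul, mul_inv_cancel, coe_one]
  · have hneg : a * b * (a⁻¹ * β a a) * β (a * b) (a⁻¹ * β a a) = a * b * a⁻¹ * ↑(β b a)⁻¹ := by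
      simp only [map_mul, MonoidHom.mul_apply, map_inv, hβz', mul_one, ← mul_assoc]
      rw [mul_assoc _ (β a a : G), ← coe_mul, mul_inv, mul_inv_cancel_left]
    dsimp only
    rw [hneg, map_mul β (a * b * a⁻¹), hconj, MonoidHom.mul_apply, hβz, mul_one, map_mul (β b),
      Commute.right_comm (hc _ (a * c)), mul_assoc (a * b * a⁻¹ * (a * c)), ← coe_mul,
      inv_mul_cancel_left]
    group

variable (hG : commutator G ≤ center G)
include hG

theorem commutatorElement_mem_center (a b : G) : ⁅a, b⁆ ∈ center G :=
  hG (commutator_mem_commutator (mem_top a) (mem_top b))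

theorem commutatorElement_mul_left_of_le_center (a b c : G) :
    ⁅a * b, c⁆ = ⁅a, c⁆ * ⁅b, c⁆ := by
  have hz := mem_center_iff.mp (commutatorElement_mem_center hG b c)
  rw [commutatorElement_mul_left_eq_conj_mul, hz a, mul_inv_cancel_right]
  exact (hz _).symm

theorem commutatorElement_mul_right_of_le_center (a b c : G) :
    ⁅a, b * c⁆ = ⁅a, b⁆ * ⁅a, c⁆ := by
  have hz := mem_center_iff.mp (commutatorElement_mem_center hG a c)
  rw [commutatorElement_mul_right_eq_mul_conj, mul_assoc ⁅a, b⁆ b, hz b, ← mul_assoc,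
    mul_inv_cancel_right]

def commutatorPairing : G →* G →* center G where
  toFun a :=
    { toFun b := ⟨⁅a, b⁆, commutatorElement_mem_center hG a b⟩
      map_one' := Subtype.ext (commutatorElement_one_right a)
      map_mul' b c := Subtype.ext (commutatorElement_mul_right_of_le_center hG a b c) }
  map_one' := MonoidHom.ext fun b => Subtype.ext (commutatorElement_one_left b)
  map_mul' a b := MonoidHom.ext fun c =>
    Subtype.ext (commutatorElement_mul_left_of_le_center hG a b c)

@[simp]
theorem coe_commutatorPairing_apply (a b : G) : (commutatorPairing hG a b : G) = ⁅a, b⁆ := rfl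

theorem exists_bilinear_antisymm_eq_commutator [Finite G] :
    ∃ β : G →* G →* center G, center G ≤ β.ker ∧ center G ≤ β.flip.ker ∧
      ∀ a b : G, ⁅a, b⁆ * β a b = β b a := by
  have : IsMulCommutative (G ⧸ center G) := Normal.quotient_commutative_iff_commutator_le.mpr hG
  have hker : center G ≤ (commutatorPairing hG).ker := fun z hz => MonoidHom.ext fun a =>
    Subtype.ext (commutatorElement_eq_one_iff_mul_comm.mpr (mem_center_iff.mp hz a).symm)
  have hker' : center G ≤ (commutatorPairing hG).flip.ker := fun z hz => MonoidHom.ext fun a =>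
    Subtype.ext (commutatorElement_eq_one_iff_mul_comm.mpr (mem_center_iff.mp hz a))
  obtain ⟨B, hB⟩ := MonoidHom.exists_eq_div_flip_of_alternating
    ((commutatorPairing hG).liftQuotient₂ hker hker')
    fun x => QuotientGroup.induction_on x fun a => Subtype.ext (commutatorElement_self a)
  let π := QuotientGroup.mk' (center G)
  refine ⟨(B.flip.comp π).compl₂ π, fun z hz => ?_, fun z hz => ?_, fun a b => ?_⟩
  · ext a
    simp [π, (QuotientGroup.eq_one_iff z).mpr hz]
  · ext a
    simp [π, (QuotientGroup.eq_one_iff z).mpr hz]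
  · have h : commutatorPairing hG a b * B b a = B a b :=
      eq_div_iff_mul_eq'.mp congr($hB (a : G ⧸ center G) (b : G ⧸ center G))
    simpa [π] using congr(($h : G))

end ClassTwo

theorem nilpotent_class_two_isIYB_general
    {G : Type*} [Group G] [Finite G]
    (hclass : (⊤ : Subgroup G).lowerCentralSeries 2 = ⊥) :
    IsIYB G := by
  obtain ⟨β, h₁, h₂, hβ⟩ := exists_bilinear_antisymm_eq_commutator
    (commutator_le_center_of_lowerCentralSeries_two_eq_bot hclass)
  exact isIYB_of_bilinear β h₁ h₂ hβ

/-- every finite nilpotent group of nilpotency class at most `2`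
admits a left brace structure, i.e. is an IYB-group. -/
theorem nilpotent_class_two_isIYB
    {G : Type*} [Group G] [Finite G] (hnil : Group.IsNilpotent G)
    (hclass : (⊤ : Subgroup G).lowerCentralSeries 2 = ⊥) :
    IsIYB G :=
  nilpotent_class_two_isIYB_general hclass
end

section
/- Every finite group G having a Sylow tower (an ordering p₁, …, p_k of π(G) and Sylow p_i-subgroups A_i with A₁⋯A_i normal in G for all i) is the multiplicative group of a skew left brace of nilpotent type (an N·YB-group). -/
open scoped Pointwise

universe v

/-- A finite group is an `𝒩·YB`-group iff it is the multiplicative group of a skew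
left brace of nilpotent type: there is a second, nilpotent group structure `(G, +)`
(transported from a nilpotent group `A` along a bijection `f`) satisfying the skew
brace law `x(y + z) = xy − x + xz`. -/
def IsNilpotentTypeSkewBraceGroup (G : Type u) [Group G] : Prop :=
  ∃ (A : Type u) (_ : Group A) (f : G ≃ A),
    Group.IsNilpotent A ∧
    ∀ x y z : G, x * f.symm (f y * f z) = f.symm (f (x * y) * (f x)⁻¹ * f (x * z))


lemma isNTSBG_of_isNilpotent {G : Type v} [Group G] [Group.IsNilpotent G] :
    IsNilpotentTypeSkewBraceGroup G :=
  ⟨G, ‹Group G›, Equiv.refl G, ‹_›, fun x y z => by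
    simp only [Equiv.refl_apply, Equiv.refl_symm]
    group⟩

lemma isNTSBG_congr {G H : Type v} [Group G] [Group H] (e : G ≃* H)
    (h : IsNilpotentTypeSkewBraceGroup H) : IsNilpotentTypeSkewBraceGroup G := by
  obtain ⟨A, iA, f, hnil, hlaw⟩ := h
  refine ⟨A, iA, e.toEquiv.trans f, hnil, fun x y z => ?_⟩
  show x * e.symm (f.symm (f (e y) * f (e z)))
      = e.symm (f.symm (f (e (x * y)) * (f (e x))⁻¹ * f (e (x * z))))
  rw [map_mul e, map_mul e]
  apply e.injective
  rw [map_mul e, e.apply_symm_apply, e.apply_symm_apply]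
  exact hlaw (e x) (e y) (e z)



lemma isNTSBG_combine {G : Type v} [Group G] {N K : Subgroup G} [hNn : N.Normal]
    (hc : N.IsComplement' K) (hN : Group.IsNilpotent N)
    (hK : IsNilpotentTypeSkewBraceGroup K) : IsNilpotentTypeSkewBraceGroup G := by
  classical
  obtain ⟨A, iA, f, hnilA, hlaw⟩ := hK
  haveI := hN
  haveI := hnilA
  let d : G ≃ ↥N × ↥K := hc.equiv
  have hd : ∀ (n : N) (k : K), d.symm (n, k) = (n : G) * k := fun n k => rfl
  have hsplit : ∀ (n : N) (k : K), d ((n : G) * k) = (n, k) := fun n k => by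
    rw [← hd n k, d.apply_symm_apply]
  have hdec : ∀ g : G, ((d g).1 : G) * (d g).2 = g := hc.equiv_fst_mul_equiv_snd
  -- conjugation of N by elements of K
  let c : K → N → N := fun k n => ⟨(k : G) * n * (k : G)⁻¹, hNn.conj_mem n.1 n.2 k⟩
  refine ⟨↥N × A, inferInstance, d.trans (Equiv.prodCongr (Equiv.refl ↥N) f),
    inferInstance, fun x y z => ?_⟩
  set F : G ≃ ↥N × A := d.trans (Equiv.prodCongr (Equiv.refl ↥N) f) with hF
  obtain ⟨nx, kx, hx⟩ : ∃ (n : N) (k : K), (n : G) * k = x := ⟨(d x).1, (d x).2, hdec x⟩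
  obtain ⟨ny, ky, hy⟩ : ∃ (n : N) (k : K), (n : G) * k = y := ⟨(d y).1, (d y).2, hdec y⟩
  obtain ⟨nz, kz, hz⟩ : ∃ (n : N) (k : K), (n : G) * k = z := ⟨(d z).1, (d z).2, hdec z⟩
  have hFapp : ∀ (n : N) (k : K), F ((n : G) * k) = (n, f k) := fun n k => by
    simp only [hF, Equiv.trans_apply, hsplit, Equiv.prodCongr_apply, Equiv.coe_refl,
      Prod.map_apply, id_eq]
  have hFsymm : ∀ (n : N) (a : A), F.symm (n, a) = (n : G) * (f.symm a : G) := fun n a => by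
    simp only [hF, Equiv.symm_trans_apply, Equiv.prodCongr_symm, Equiv.refl_symm,
      Equiv.prodCongr_apply, Equiv.coe_refl, Prod.map_apply, id_eq, hd]
  -- decompose the products
  have hxy : x * y = ((nx * c kx ny : N) : G) * ((kx * ky : K) : G) := by
    rw [← hx, ← hy]; push_cast [c]; group
  have hxz : x * z = ((nx * c kx nz : N) : G) * ((kx * kz : K) : G) := by
    rw [← hx, ← hz]; push_cast [c]; group
  have hyz : F y * F z = ((ny * nz : N), f ky * f kz) := by
    rw [← hy, ← hz, hFapp, hFapp]; rfl
  rw [hyz, hxy, hxz, ← hx, hFapp, hFapp, hFapp]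
  have hprod : ((nx * c kx ny : N), f (kx * ky)) * ((nx : N), f kx)⁻¹ * ((nx * c kx nz : N), f (kx * kz))
      = ((nx * c kx ny * nx⁻¹ * (nx * c kx nz) : N),
         f (kx * ky) * (f kx)⁻¹ * f (kx * kz)) := rfl
  rw [hprod]
  have h2 : f (kx * ky) * (f kx)⁻¹ * f (kx * kz) = f (kx * f.symm (f ky * f kz)) := by
    have := hlaw kx ky kz
    apply f.symm.injective
    rw [f.symm_apply_apply, ← this]
  rw [h2]
  have h1 : F.symm ((ny * nz : N), f ky * f kz)
      = ((ny * nz : N) : G) * (f.symm (f ky * f kz) : G) := by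
    have := hFsymm (ny * nz) (f ky * f kz); exact this
  rw [h1, hFsymm, f.symm_apply_apply]
  push_cast [c]
  group



noncomputable def complMulEquivQuotient {G : Type v} [Group G] {N K : Subgroup G} [hNn : N.Normal]
    (hc : N.IsComplement' K) : K ≃* G ⧸ N := by
  refine MulEquiv.ofBijective ((QuotientGroup.mk' N).comp K.subtype) ⟨?_, ?_⟩
  · rw [← MonoidHom.ker_eq_bot_iff, eq_bot_iff]
    intro x hx
    have hxN : (x : G) ∈ N := by
      rw [MonoidHom.mem_ker, MonoidHom.comp_apply, QuotientGroup.mk'_apply,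
        QuotientGroup.eq_one_iff] at hx
      exact hx
    have : (x : G) ∈ N ⊓ K := ⟨hxN, x.2⟩
    rw [disjoint_iff.mp hc.disjoint] at this
    rw [Subgroup.mem_bot] at this
    rw [Subgroup.mem_bot]
    exact Subtype.ext this
  · intro q
    induction q using QuotientGroup.induction_on with
    | H g =>
      obtain ⟨⟨n, k⟩, hnk⟩ := hc.2 g
      refine ⟨⟨k, k.2⟩, ?_⟩
      show QuotientGroup.mk (k : G) = QuotientGroup.mk g
      rw [← hnk, QuotientGroup.eq]
      have h : ((k : G))⁻¹ * ((n : G) * k) = (k : G)⁻¹ * n * ((k : G)⁻¹)⁻¹ := by group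
      rw [h]
      exact hNn.conj_mem _ n.2 _

lemma image_list_prod {G H : Type*} [Group G] [Group H] (π : G →* H) :
    ∀ L : List (Set G), π '' L.prod = (L.map fun s => π '' s).prod := by
  intro L
  induction L with
  | nil => simp [Set.image_singleton]; rfl
  | cons a L ih => simp [Set.image_mul, ih]

theorem aux_tower : ∀ (k : ℕ) (G : Type u) [Group G] [Finite G] (p : Fin k → ℕ),
    (∀ i, (p i).Prime) → Function.Injective p →
    ({q : ℕ | q.Prime ∧ q ∣ Nat.card G} = Set.range p) →
    ∀ (S : ∀ i, Sylow (p i) G),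
    (∀ i : Fin k, ∃ H : Subgroup G, H.Normal ∧
      (H : Set G) =
        (List.ofFn fun j : Fin k =>
          if j ≤ i then (((S j : Subgroup G)) : Set G) else 1).prod) →
    IsNilpotentTypeSkewBraceGroup G := by
  intro k
  induction k with
  | zero =>
    intro G _ _ p hp hinj hrange S htower
    have hcard : Nat.card G = 1 := by
      by_contra h
      obtain ⟨q, hq, hqd⟩ := Nat.exists_prime_and_dvd h
      have : q ∈ Set.range p := hrange ▸ ⟨hq, hqd⟩
      obtain ⟨i, -⟩ := this
      exact i.elim0
    haveI : Subsingleton G := (Nat.card_eq_one_iff_unique.mp hcard).1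
    exact isNTSBG_of_isNilpotent
  | succ k ih =>
    intro G _ _ p hp hinj hrange S htower
    haveI : Fact (p 0).Prime := ⟨hp 0⟩
    set N : Subgroup G := (S 0 : Subgroup G) with hNdef
    -- N is normal
    have hNnormal : N.Normal := by
      obtain ⟨H, hHnorm, hHcar⟩ := htower 0
      have hH : H = N := by
        apply SetLike.coe_injective
        rw [hHcar, List.ofFn_succ, List.prod_cons]
        have h0 : (if (0 : Fin (k+1)) ≤ 0 then ((S 0 : Subgroup G) : Set G) else 1)
            = (N : Set G) := if_pos le_rfl
        have htail : (fun j : Fin k =>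
            if (j.succ : Fin (k+1)) ≤ 0 then ((S j.succ : Subgroup G) : Set G) else 1)
            = fun _ => 1 :=
          funext fun j => if_neg (by simp [Fin.le_zero_iff, Fin.succ_ne_zero])
        rw [h0, htail]
        simp
      rwa [hH] at hHnorm
    haveI := hNnormal
    have hG0 : Nat.card G ≠ 0 := Nat.card_pos.ne'
    set ν := (Nat.card G).factorization (p 0) with hνdef
    have hcardN : Nat.card N = (p 0) ^ ν := Sylow.card_eq_multiplicity (S 0)
    have hndvd : ¬ p 0 ∣ N.index := by
      intro hdvd
      have h1 : (p 0) ^ (ν + 1) ∣ Nat.card G := by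
        rw [pow_succ, ← Subgroup.card_mul_index (H := N)]
        exact mul_dvd_mul (dvd_of_eq hcardN.symm) hdvd
      exact Nat.pow_succ_factorization_not_dvd hG0 (hp 0) h1
    have hcop : Nat.Coprime (Nat.card N) N.index := by
      rw [hcardN]
      exact Nat.Coprime.pow_left _ (((hp 0).coprime_iff_not_dvd).mpr hndvd)
    obtain ⟨K, hcK⟩ := Subgroup.exists_right_complement'_of_coprime hcop
    have hsurj : Function.Surjective (QuotientGroup.mk' N) := QuotientGroup.mk'_surjective N
    set p' : Fin k → ℕ := fun i => p i.succ with hp'def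
    have hp' : ∀ i, (p' i).Prime := fun i => hp _
    have hinj' : Function.Injective p' := fun a b h => Fin.succ_injective _ (hinj h)
    let S' : ∀ i, Sylow (p' i) (G ⧸ N) := fun i =>
      haveI : Fact (p' i).Prime := ⟨hp' i⟩
      (S i.succ).mapSurjective hsurj
    have hcardQ : Nat.card N * Nat.card (G ⧸ N) = Nat.card G := by
      rw [← Subgroup.index_eq_card]; exact Subgroup.card_mul_index (H := N)
    have hndvdQ : ¬ p 0 ∣ Nat.card (G ⧸ N) := by
      rw [← Subgroup.index_eq_card]; exact hndvd
    have hrange' : {q : ℕ | q.Prime ∧ q ∣ Nat.card (G ⧸ N)} = Set.range p' := by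
      ext q
      simp only [Set.mem_setOf_eq, Set.mem_range]
      constructor
      · rintro ⟨hq, hdvd⟩
        have hqG : q ∣ Nat.card G := by
          rw [← hcardQ]; exact hdvd.mul_left _
        have hmem : q ∈ Set.range p := by rw [← hrange]; exact ⟨hq, hqG⟩
        obtain ⟨i, rfl⟩ := hmem
        have hi0 : i ≠ 0 := by rintro rfl; exact hndvdQ hdvd
        obtain ⟨j, rfl⟩ := Fin.eq_succ_of_ne_zero hi0
        exact ⟨j, rfl⟩
      · rintro ⟨j, rfl⟩
        refine ⟨hp' j, ?_⟩
        have hqG : p' j ∣ Nat.card G := by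
          have hmem : p j.succ ∈ {q : ℕ | q.Prime ∧ q ∣ Nat.card G} := by
            rw [hrange]; exact ⟨j.succ, rfl⟩
          exact hmem.2
        have hnotN : ¬ p' j ∣ Nat.card N := by
          rw [hcardN]
          intro hdvd
          have heq := (Nat.prime_dvd_prime_iff_eq (hp' j) (hp 0)).mp
            ((hp' j).dvd_of_dvd_pow hdvd)
          exact Fin.succ_ne_zero j (hinj heq)
        rw [← hcardQ] at hqG
        exact ((Nat.Prime.dvd_mul (hp' j)).mp hqG).resolve_left hnotN
    have htower' : ∀ i : Fin k, ∃ H : Subgroup (G ⧸ N), H.Normal ∧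
        (H : Set (G ⧸ N)) = (List.ofFn fun j : Fin k =>
          if j ≤ i then ((S' j : Subgroup (G ⧸ N)) : Set (G ⧸ N)) else 1).prod := by
      intro i
      obtain ⟨H, hHnorm, hHcar⟩ := htower i.succ
      refine ⟨H.map (QuotientGroup.mk' N), Subgroup.Normal.map hHnorm _ hsurj, ?_⟩
      rw [Subgroup.coe_map, hHcar, image_list_prod, List.map_ofFn, List.ofFn_succ,
        List.prod_cons]
      have hhead : ((fun s => ⇑(QuotientGroup.mk' N) '' s) ∘ fun j : Fin (k+1) =>
          if j ≤ i.succ then ((S j : Subgroup G) : Set G) else 1) 0 = 1 := by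
        simp only [Function.comp_apply, Fin.zero_le, if_pos]
        rw [show ((S 0 : Subgroup G) : Set G) = (N : Set G) from rfl, ← Subgroup.coe_map,
          QuotientGroup.map_mk'_self, Subgroup.coe_bot]
        rfl
      have htail : (fun i1 : Fin k => ((fun s => ⇑(QuotientGroup.mk' N) '' s) ∘
          fun j : Fin (k+1) =>
          if j ≤ i.succ then ((S j : Subgroup G) : Set G) else 1) i1.succ)
          = fun j : Fin k => if j ≤ i then ((S' j : Subgroup (G ⧸ N)) : Set (G ⧸ N)) else 1 := by
        funext j
        simp only [Function.comp_apply, Fin.succ_le_succ_iff]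
        by_cases hji : j ≤ i
        · rw [if_pos hji, if_pos hji, ← Subgroup.coe_map]
          rfl
        · rw [if_neg hji, if_neg hji,
            show (1 : Set G) = {1} from rfl, Set.image_singleton, map_one]
          rfl
      rw [hhead, htail, one_mul]
    have hQ : IsNilpotentTypeSkewBraceGroup (G ⧸ N) :=
      ih (G ⧸ N) p' hp' hinj' hrange' S' htower'
    have hK : IsNilpotentTypeSkewBraceGroup K :=
      isNTSBG_congr (complMulEquivQuotient hcK) hQ
    have hnilN : Group.IsNilpotent N := (S 0).isPGroup'.isNilpotent
    exact isNTSBG_combine hcK hnilN hK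

/-- every finite group with a Sylow tower (an ordering `p 0, …,
`p (k-1)` of the primes dividing `|G|` and Sylow `p i`-subgroups `S i` with each
partial product `S 0 ⋯ S i` normal in `G`) is the multiplicative group of a skew
left brace of nilpotent type. -/
theorem sylow_tower_isNilpotentTypeSkewBraceGroup
    {G : Type u} [Group G] [Finite G] (k : ℕ) (p : Fin k → ℕ)
    (hp : ∀ i, (p i).Prime) (hinj : Function.Injective p)
    (hrange : {q : ℕ | q.Prime ∧ q ∣ Nat.card G} = Set.range p)
    (S : ∀ i, Sylow (p i) G)
    (htower : ∀ i : Fin k, ∃ H : Subgroup G, H.Normal ∧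
      (H : Set G) =
        (List.ofFn fun j : Fin k =>
          if j ≤ i then (((S j : Subgroup G)) : Set G) else 1).prod) :
    IsNilpotentTypeSkewBraceGroup G := by
  exact aux_tower k G p hp hinj hrange S htower
end
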